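/- arXiv:2601.10351 — 2 statements merged into one kernel-verified Lean document; each statement's English description precedes it below -/
import Mathlib

section
/- Let f be a pseudo-polynomial with d ≥ 2, leading exponent θ_d and leading coefficient a_d. For a large positive integer N, let P be the largest real solution of f(P) = N. Then P − (N/a_d)^{1/θ_d} ≪ P^{θ_{d−1} − θ_d + 1}, where the implied constant depends only on f. -/
open Finset

/-- A pseudo-polynomial `f(x) = a_d x^{θ_d} + ⋯ + a_1 x^{θ_1}` with real coefficients,
`a_d > 0`, real exponents `1 ≤ θ_1 < ⋯ < θ_d`, and at least one non-integral exponent. -/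
structure PseudoPoly where
  d : ℕ
  d_pos : 1 ≤ d
  a : ℕ → ℝ
  θ : ℕ → ℝ
  a_pos : 0 < a d
  θ_one : 1 ≤ θ 1
  θ_mono : ∀ i, 1 ≤ i → i < d → θ i < θ (i + 1)
  nonint : ∃ i, 1 ≤ i ∧ i ≤ d ∧ ∀ n : ℤ, θ i ≠ (n : ℝ)

noncomputable def PseudoPoly.eval (f : PseudoPoly) (x : ℝ) : ℝ :=
  ∑ i ∈ Finset.Icc 1 f.d, f.a i * x ^ f.θ i

/-- `P` is the largest real solution of `f(P) = N`. -/
def PseudoPoly.IsLargestRoot (f : PseudoPoly) (N : ℝ) (P : ℝ) : Prop :=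
  f.eval P = N ∧ ∀ x : ℝ, f.eval x = N → x ≤ P

/-!
Split off the leading term: `f x = a_d x^{θ_d} + g x` with `|g x| ≤ A x^{θ_{d-1}}` for `x ≥ 1`,
where `A = ∑_{i<d} |a_i|`.
With `Q = (N/a_d)^{1/θ_d}`, the equation `f P = N` gives `|P^{θ_d} - Q^{θ_d}| ≤ (A/a_d) P^{θ_{d-1}}`,
and the elementary bound `P^{t-1} |P - Q| ≤ |P^t - Q^t|` (for `t ≥ 1`, `P, Q ≥ 0`) turns this into
the claim. It only remains to see `P ≥ 1` for large `N`: since `f → ∞` and `f 0 = 0`, there is a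
nonnegative root, so `P ≥ 0`, and `f` is bounded on `[0, 1]`.
-/

theorem Real.rpow_sub_one_mul_sub_le_rpow_sub_rpow {x y t : ℝ} (hy : 0 ≤ y) (hyx : y ≤ x)
    (ht : 1 ≤ t) : x ^ (t - 1) * (x - y) ≤ x ^ t - y ^ t := by
  have hx : 0 ≤ x := hy.trans hyx
  have rpow_eq : ∀ z : ℝ, 0 ≤ z → z ^ t = z ^ (t - 1) * z := fun z hz => by
    rw [← Real.rpow_add_one' hz (by linarith), sub_add_cancel]
  have hpow : y ^ (t - 1) ≤ x ^ (t - 1) := Real.rpow_le_rpow hy hyx (by linarith)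
  rw [rpow_eq x hx, rpow_eq y hy]
  nlinarith

theorem Real.abs_sub_rpow_one_div_le {x y t : ℝ} (hx : 0 < x) (hy : 0 ≤ y) (ht : 1 ≤ t) :
    |x - y ^ (1 / t)| ≤ |x ^ t - y| * x ^ (1 - t) := by
  set z := y ^ (1 / t)
  have hz : 0 ≤ z := Real.rpow_nonneg hy _
  have hzt : z ^ t = y := by
    rw [← Real.rpow_mul hy, one_div_mul_cancel (by linarith), Real.rpow_one]
  have hxt : 0 < x ^ (t - 1) := Real.rpow_pos_of_pos hx _
  have key : x ^ (t - 1) * |x - z| ≤ |x ^ t - z ^ t| := by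
    rcases le_total z x with hzx | hxz
    · rw [abs_of_nonneg (sub_nonneg.2 hzx),
        abs_of_nonneg (sub_nonneg.2 (Real.rpow_le_rpow hz hzx (by linarith)))]
      exact Real.rpow_sub_one_mul_sub_le_rpow_sub_rpow hz hzx ht
    · rw [abs_sub_comm, abs_of_nonneg (sub_nonneg.2 hxz), abs_sub_comm,
        abs_of_nonneg (sub_nonneg.2 (Real.rpow_le_rpow hx.le hxz (by linarith)))]
      calc x ^ (t - 1) * (z - x) ≤ z ^ (t - 1) * (z - x) := by gcongr
        _ ≤ z ^ t - x ^ t := Real.rpow_sub_one_mul_sub_le_rpow_sub_rpow hx.le hxz ht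
  rw [hzt] at key
  rw [show 1 - t = -(t - 1) by ring, Real.rpow_neg hx.le, ← div_eq_mul_inv, le_div_iff₀ hxt]
  linarith

namespace PseudoPoly

variable (f : PseudoPoly)

theorem θ_le_θ {i j : ℕ} (hi : 1 ≤ i) (hij : i ≤ j) (hj : j ≤ f.d) : f.θ i ≤ f.θ j := by
  induction j, hij using Nat.le_induction with
  | base => rfl
  | succ j hij ih => exact (ih (by omega)).trans (f.θ_mono j (by omega) (by omega)).le

theorem one_le_θ {i : ℕ} (hi : 1 ≤ i) (hid : i ≤ f.d) : 1 ≤ f.θ i :=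
  f.θ_one.trans (f.θ_le_θ le_rfl hi hid)

theorem continuous_eval : Continuous f.eval := by
  refine continuous_finsetSum _ fun i hi => continuous_const.mul ?_
  obtain ⟨hi, hid⟩ := Finset.mem_Icc.1 hi
  exact Real.continuous_rpow_const (by linarith [f.one_le_θ hi hid])

theorem eval_zero : f.eval 0 = 0 := by
  refine Finset.sum_eq_zero fun i hi => ?_
  obtain ⟨hi, hid⟩ := Finset.mem_Icc.1 hi
  rw [Real.zero_rpow (by linarith [f.one_le_θ hi hid]), mul_zero]

theorem abs_eval_sub_leading_le {x : ℝ} (hx : 1 ≤ x) :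
    |f.eval x - f.a f.d * x ^ f.θ f.d| ≤
      (∑ i ∈ Ico 1 f.d, |f.a i|) * x ^ f.θ (f.d - 1) := by
  have hlower : f.eval x - f.a f.d * x ^ f.θ f.d = ∑ i ∈ Ico 1 f.d, f.a i * x ^ f.θ i := by
    rw [eval, ← Finset.Ico_add_one_right_eq_Icc, Finset.sum_Ico_succ_top f.d_pos,
      add_sub_cancel_right]
  rw [hlower, Finset.sum_mul]
  refine (Finset.abs_sum_le_sum_abs _ _).trans (Finset.sum_le_sum fun i hi => ?_)
  obtain ⟨hi, hid⟩ := Finset.mem_Ico.1 hi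
  rw [abs_mul, abs_of_nonneg (Real.rpow_nonneg (by linarith) _)]
  exact mul_le_mul_of_nonneg_left
    (Real.rpow_le_rpow_of_exponent_le hx (f.θ_le_θ hi (by omega) (by omega))) (abs_nonneg _)

theorem tendsto_eval_atTop (hd : 2 ≤ f.d) : Filter.Tendsto f.eval Filter.atTop Filter.atTop := by
  set s := f.θ (f.d - 1)
  set t := f.θ f.d
  set A := ∑ i ∈ Ico 1 f.d, |f.a i|
  have hst : s < t := by
    have := f.θ_mono (f.d - 1) (by omega) (by omega)
    rwa [Nat.sub_add_cancel f.d_pos] at this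
  have hs : 0 < s := by linarith [f.one_le_θ (i := f.d - 1) (by omega) (by omega)]
  have hlower : Filter.Tendsto (fun x : ℝ => x ^ s * (f.a f.d * x ^ (t - s) - A))
      Filter.atTop Filter.atTop :=
    (tendsto_rpow_atTop hs).atTop_mul_atTop₀ <| Filter.tendsto_atTop_add_const_right _ _ <|
      (tendsto_rpow_atTop (by linarith)).const_mul_atTop f.a_pos
  refine Filter.tendsto_atTop_mono' _ ?_ hlower
  filter_upwards [Filter.eventually_ge_atTop (1 : ℝ)] with x hx
  have hsplit : x ^ s * x ^ (t - s) = x ^ t := by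
    rw [← Real.rpow_add (by linarith), add_sub_cancel]
  have := (abs_le.1 (f.abs_eval_sub_leading_le hx)).1
  linear_combination this + f.a f.d * hsplit

theorem IsLargestRoot.nonneg (hd : 2 ≤ f.d) {N P : ℝ} (hN : 0 ≤ N) (hP : f.IsLargestRoot N P) :
    0 ≤ P := by
  obtain ⟨X, hXN, hX⟩ := ((f.tendsto_eval_atTop hd).eventually_ge_atTop N).and
    (Filter.eventually_ge_atTop 0) |>.exists
  obtain ⟨x, hx, hxN⟩ := intermediate_value_Icc hX f.continuous_eval.continuousOn
    (show N ∈ Set.Icc (f.eval 0) (f.eval X) from ⟨f.eval_zero.symm ▸ hN, hXN⟩)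
  exact hx.1.trans (hP.2 x hxN)

theorem exists_lt_of_isLargestRoot (hd : 2 ≤ f.d) (R : ℝ) :
    ∃ N₀ : ℝ, ∀ N P, N₀ ≤ N → f.IsLargestRoot N P → R < P := by
  obtain ⟨B, hB⟩ :=
    (isCompact_Icc (a := 0) (b := R)).bddAbove_image f.continuous_eval.continuousOn
  refine ⟨max (B + 1) 0, fun N P hN hP => ?_⟩
  have hP0 := IsLargestRoot.nonneg f hd ((le_max_right _ _).trans hN) hP
  by_contra! hPR
  have := hB ⟨P, ⟨hP0, hPR⟩, rfl⟩
  linarith [hP.1, le_max_left (B + 1) 0]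

end PseudoPoly

/-- For `d ≥ 2` and large `N`, the largest solution `P` of `f(P) = N` satisfies
`P − (N/a_d)^{1/θ_d} ≪ P^{θ_{d−1} − θ_d + 1}`. -/
theorem largestRoot_approx (f : PseudoPoly) (hd : 2 ≤ f.d) :
    ∃ C > (0 : ℝ), ∃ N₀ : ℕ, ∀ N : ℕ, N₀ ≤ N → ∀ P : ℝ, f.IsLargestRoot N P →
      |P - ((N : ℝ) / f.a f.d) ^ (1 / f.θ f.d)| ≤
        C * P ^ (f.θ (f.d - 1) - f.θ f.d + 1) := by
  set s := f.θ (f.d - 1)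
  set t := f.θ f.d
  set c := f.a f.d
  set A := ∑ i ∈ Ico 1 f.d, |f.a i|
  have hc : 0 < c := f.a_pos
  have hA : 0 ≤ A := Finset.sum_nonneg fun i _ => abs_nonneg (f.a i)
  obtain ⟨N₀, hN₀⟩ := f.exists_lt_of_isLargestRoot hd 1
  refine ⟨(A + 1) / c, by positivity, ⌈N₀⌉₊, fun N hN P hP => ?_⟩
  have hP1 : 1 < P := hN₀ N P (Nat.ceil_le.1 hN) hP
  have hgap : |P ^ t - N / c| ≤ A / c * P ^ s := by
    have h := f.abs_eval_sub_leading_le hP1.le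
    rw [hP.1] at h
    rw [show P ^ t - N / c = -(N - c * P ^ t) / c by field_simp; ring, abs_div, abs_neg,
      abs_of_pos hc, div_le_iff₀ hc]
    calc _ ≤ A * P ^ s := h
      _ = A / c * P ^ s * c := by field_simp
  calc |P - ((N : ℝ) / c) ^ (1 / t)| ≤ |P ^ t - N / c| * P ^ (1 - t) :=
        Real.abs_sub_rpow_one_div_le (by linarith) (by positivity) (f.one_le_θ (by omega) le_rfl)
    _ ≤ A / c * P ^ s * P ^ (1 - t) := by gcongr
    _ ≤ (A + 1) / c * P ^ (s - t + 1) := by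
        rw [mul_assoc, ← Real.rpow_add (by linarith), show s + (1 - t) = s - t + 1 by ring]
        gcongr
        linarith
end

section
/- Let f be a pseudo-polynomial with leading exponent θ_d, N a sufficiently large positive integer, and t ≥ 1 a real number. Then the counting function #{n ∈ ℕ : f(n) ≤ t} satisfies #{n ∈ ℕ : f(n) ≤ t} = (t/a_d)^{1/θ_d} + O(t^{(1 + θ_{d−1} − θ_d)/θ_d}) + O(1), with implied constants depending only on f. -/
open Finset

/-- `θ_{d-1}`, with the convention `θ_0 = 1` if `d = 1`. -/
noncomputable def PseudoPoly.θprev (f : PseudoPoly) : ℝ :=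
  if f.d = 1 then 1 else f.θ (f.d - 1)

lemma PseudoPoly.theta_le (f : PseudoPoly) {i j : ℕ} (h1 : 1 ≤ i) (hij : i ≤ j)
    (hjd : j ≤ f.d) : f.θ i ≤ f.θ j := by
  induction j with
  | zero => exact absurd (h1.trans hij) (by omega)
  | succ k ih =>
    rcases Nat.lt_or_ge i (k + 1) with h | h
    · have hik : i ≤ k := by omega
      have h2 := ih hik (by omega)
      have h3 : f.θ k < f.θ (k + 1) := f.θ_mono k (h1.trans hik) (by omega)
      linarith
    · have hik : i = k + 1 := by omega
      exact hik ▸ le_refl _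

lemma PseudoPoly.one_le_θprev (f : PseudoPoly) : 1 ≤ f.θprev := by
  have hd := f.d_pos
  unfold PseudoPoly.θprev
  split
  · exact le_refl 1
  · rename_i h
    calc (1 : ℝ) ≤ f.θ 1 := f.θ_one
      _ ≤ f.θ (f.d - 1) := f.theta_le (le_refl 1) (by omega) (by omega)

lemma PseudoPoly.θprev_lt (f : PseudoPoly) : f.θprev < f.θ f.d := by
  have hd := f.d_pos
  unfold PseudoPoly.θprev
  split
  · rename_i h
    rw [h]
    obtain ⟨i, hi1, hid, hni⟩ := f.nonint
    have hi : i = 1 := by omega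
    subst hi
    have hne := hni 1
    push_cast at hne
    exact lt_of_le_of_ne f.θ_one (Ne.symm hne)
  · rename_i h
    have h2 : f.d - 1 + 1 = f.d := by omega
    have h3 := f.θ_mono (f.d - 1) (by omega) (by omega)
    rwa [h2] at h3

lemma PseudoPoly.eval_near (f : PseudoPoly) (x : ℝ) (hx : 1 ≤ x) :
    |f.eval x - f.a f.d * x ^ f.θ f.d| ≤
      (∑ i ∈ Finset.Icc 1 (f.d - 1), |f.a i|) * x ^ f.θprev := by
  have hd := f.d_pos
  have hx0 : (0 : ℝ) < x := by linarith
  have hsplit : f.eval x =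
      (∑ i ∈ Finset.Icc 1 (f.d - 1), f.a i * x ^ f.θ i) + f.a f.d * x ^ f.θ f.d := by
    obtain ⟨m, hm⟩ : ∃ m, f.d = m + 1 := ⟨f.d - 1, by omega⟩
    unfold PseudoPoly.eval
    rw [hm, Nat.add_sub_cancel, ← Finset.insert_Icc_right_eq_Icc_add_one (by omega),
      Finset.sum_insert (by simp)]
    ring
  rw [hsplit, add_sub_cancel_right]
  calc |∑ i ∈ Finset.Icc 1 (f.d - 1), f.a i * x ^ f.θ i|
      ≤ ∑ i ∈ Finset.Icc 1 (f.d - 1), |f.a i * x ^ f.θ i| :=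
        Finset.abs_sum_le_sum_abs _ _
    _ ≤ ∑ i ∈ Finset.Icc 1 (f.d - 1), |f.a i| * x ^ f.θprev := by
        refine Finset.sum_le_sum fun i hi => ?_
        rw [Finset.mem_Icc] at hi
        have hd2 : f.d ≠ 1 := by omega
        have hθp : f.θprev = f.θ (f.d - 1) := by unfold PseudoPoly.θprev; rw [if_neg hd2]
        rw [abs_mul, abs_of_nonneg (Real.rpow_nonneg hx0.le _)]
        refine mul_le_mul_of_nonneg_left ?_ (abs_nonneg _)
        rw [hθp]
        exact Real.rpow_le_rpow_of_exponent_le hx (f.theta_le hi.1 hi.2 (by omega))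
    _ = (∑ i ∈ Finset.Icc 1 (f.d - 1), |f.a i|) * x ^ f.θprev := by
        rw [Finset.sum_mul]

set_option maxHeartbeats 1000000 in
/-- The counting function of a pseudo-polynomial:
`#{n ∈ ℕ, n ≥ 1 : f(n) ≤ t} = (t/a_d)^{1/θ_d} + O(t^{(1 + θ_{d−1} − θ_d)/θ_d}) + O(1)`. -/
theorem counting_pseudoPolynomial (f : PseudoPoly) :
    ∃ C > (0 : ℝ), ∀ t : ℝ, 1 ≤ t →
      |(Nat.card {n : ℕ // 1 ≤ n ∧ f.eval n ≤ t} : ℝ) - (t / f.a f.d) ^ (1 / f.θ f.d)| ≤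
        C * t ^ ((1 + f.θprev - f.θ f.d) / f.θ f.d) + C := by
  have hd := f.d_pos
  set a := f.a f.d with ha_def
  set θ := f.θ f.d with hθ_def
  set θ' := f.θprev with hθ'_def
  set B := ∑ i ∈ Finset.Icc 1 (f.d - 1), |f.a i| with hB_def
  have ha : 0 < a := f.a_pos
  have hB : 0 ≤ B := Finset.sum_nonneg fun i _ => abs_nonneg _
  have hθ'1 : 1 ≤ θ' := f.one_le_θprev
  have hlt : θ' < θ := f.θprev_lt
  have hθ1 : 1 < θ := lt_of_le_of_lt hθ'1 hlt
  have hθ0 : 0 < θ := by linarith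
  set e := 1 + θ' - θ with he_def
  set β := e / θ with hβ_def
  set r := B / a with hr_def
  have hBa : (0:ℝ) ≤ r := by rw [hr_def]; exact div_nonneg hB ha.le
  have h2Ba : (0:ℝ) ≤ 2 * r := by linarith
  set N1 : ℕ := ⌈(2 * r) ^ (1 / (θ - θ'))⌉₊ + 1 with hN1_def
  have hN1pos : (1 : ℝ) ≤ (N1 : ℝ) := by
    have h1 : 1 ≤ N1 := by rw [hN1_def]; omega
    exact_mod_cast h1
  have hN1ge : ((2 * r) ^ (1 / (θ - θ')) : ℝ) ≤ (N1 : ℝ) := by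
    rw [hN1_def]; push_cast
    linarith [Nat.le_ceil ((2 * r) ^ (1 / (θ - θ')) : ℝ)]
  clear_value N1
  clear_value r
  clear_value a θ θ' B
  clear_value e β
  refine ⟨2 * r * a ^ (-β) + (N1 : ℝ) + 1,
    by
      have h1 : (0:ℝ) ≤ 2 * r * a ^ (-β) := mul_nonneg h2Ba (Real.rpow_nonneg ha.le _)
      linarith, ?_⟩
  intro t ht
  have ht0 : 0 < t := lt_of_lt_of_le one_pos ht
  have hta : 0 < t / a := div_pos ht0 ha
  set X := (t / a) ^ (1 / θ) with hX_def
  have hX0 : 0 < X := Real.rpow_pos_of_pos hta _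
  clear_value X
  have hXθ : X ^ θ = t / a := by
    rw [hX_def, ← Real.rpow_mul hta.le, one_div_mul_cancel (ne_of_gt hθ0), Real.rpow_one]
  have haXθ : a * X ^ θ = t := by rw [hXθ]; field_simp
  have hXe : 0 < X ^ e := Real.rpow_pos_of_pos hX0 _
  have hXe1 : X ^ (θ' - θ) * X = X ^ e := by
    nth_rewrite 2 [← Real.rpow_one X]
    rw [← Real.rpow_add hX0, he_def]
    congr 1; ring
  have hcomp : ∀ n : ℕ, 1 ≤ n → |f.eval n - a * (n : ℝ) ^ θ| ≤ B * (n : ℝ) ^ θ' := by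
    intro n hn
    have := f.eval_near n (by exact_mod_cast hn)
    rwa [← ha_def, ← hθ_def, ← hθ'_def, ← hB_def] at this
  -- Upper bound step
  have hU : ∀ n : ℕ, 1 ≤ n → f.eval n ≤ t →
      (n : ℝ) ≤ max (N1 : ℝ) (X + 2 * r * X ^ e) := by
    intro n hn hft
    rcases le_or_gt (n : ℝ) (N1 : ℝ) with h | h
    · exact le_max_of_le_left h
    refine le_max_of_le_right ?_
    have hn1 : (1 : ℝ) ≤ (n : ℝ) := by exact_mod_cast hn
    have hn0 : (0 : ℝ) < (n : ℝ) := by linarith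
    have hcmp := hcomp n hn
    have hlow : a * (n : ℝ) ^ θ - B * (n : ℝ) ^ θ' ≤ t := by
      have h2 := (abs_le.mp hcmp).1
      linarith
    have hpow : 2 * r ≤ (n : ℝ) ^ (θ - θ') := by
      have h1 : ((2 * r) ^ (1 / (θ - θ')) : ℝ) ≤ (n : ℝ) := le_trans hN1ge h.le
      have h2 := Real.rpow_le_rpow (Real.rpow_nonneg h2Ba _) h1
        (by linarith : (0:ℝ) ≤ θ - θ')
      rwa [← Real.rpow_mul h2Ba, one_div_mul_cancel (sub_ne_zero.mpr hlt.ne'),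
        Real.rpow_one] at h2
    have hnθ' : (0 : ℝ) ≤ (n : ℝ) ^ θ' := (Real.rpow_pos_of_pos hn0 _).le
    have hBn : B * (n : ℝ) ^ θ' ≤ a / 2 * (n : ℝ) ^ θ := by
      have h3 := mul_le_mul_of_nonneg_right hpow hnθ'
      have heq : (n : ℝ) ^ (θ - θ') * (n : ℝ) ^ θ' = (n : ℝ) ^ θ := by
        rw [← Real.rpow_add hn0]; congr 1; ring
      rw [heq] at h3
      have hkey : a / 2 * (2 * r * (n : ℝ) ^ θ') = B * (n : ℝ) ^ θ' := by
        rw [hr_def]; field_simp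
      nlinarith [mul_le_mul_of_nonneg_left h3 (le_of_lt (half_pos ha))]
    have h5 : a / 2 * (n : ℝ) ^ θ ≤ t := by linarith
    have h6 : (n : ℝ) ^ θ ≤ 2 * X ^ θ := by
      rw [hXθ]
      have h6' : a * ((n : ℝ) ^ θ) ≤ a * (2 * (t / a)) := by
        have heq2 : a * (2 * (t / a)) = 2 * t := by field_simp
        rw [heq2]; linarith
      exact le_of_mul_le_mul_left h6' ha
    have h7 : (n : ℝ) ≤ 2 ^ (1 / θ) * X := by
      have h8 := Real.rpow_le_rpow (Real.rpow_nonneg hn0.le _) h6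
        (div_nonneg zero_le_one hθ0.le)
      rw [← Real.rpow_mul hn0.le, mul_one_div, div_self (ne_of_gt hθ0), Real.rpow_one,
        Real.mul_rpow (by norm_num) (Real.rpow_nonneg hX0.le _), ← Real.rpow_mul hX0.le,
        mul_one_div,
        div_self (ne_of_gt hθ0), Real.rpow_one] at h8
      exact h8
    have h8 : (n : ℝ) ^ θ' ≤ 2 * X ^ θ' := by
      have h9 := Real.rpow_le_rpow hn0.le h7 (by linarith : (0:ℝ) ≤ θ')
      rw [Real.mul_rpow (Real.rpow_nonneg (by norm_num) _) hX0.le,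
        ← Real.rpow_mul (by norm_num)] at h9
      have h10 : (2 : ℝ) ^ (1 / θ * θ') ≤ 2 := by
        nth_rewrite 2 [← Real.rpow_one 2]
        refine Real.rpow_le_rpow_of_exponent_le (by norm_num) ?_
        rw [one_div, inv_mul_le_iff₀ hθ0]; linarith
      have h11 := mul_le_mul_of_nonneg_right h10 (Real.rpow_nonneg hX0.le θ')
      linarith
    set u := 2 * r * X ^ (θ' - θ) with hu_def
    have hu0 : 0 ≤ u := mul_nonneg h2Ba (Real.rpow_nonneg hX0.le _)
    clear_value u
    have hid : a * (X ^ θ * u) = 2 * B * X ^ θ' := by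
      have hXX : X ^ (θ' - θ) * X ^ θ = X ^ θ' := by
        rw [← Real.rpow_add hX0]; congr 1; ring
      rw [hu_def, hr_def, ← hXX]
      field_simp
    have h9 : a * (n : ℝ) ^ θ ≤ a * X ^ θ + 2 * B * X ^ θ' := by
      have := mul_le_mul_of_nonneg_left h8 hB
      linarith [haXθ]
    have h10 : (n : ℝ) ^ θ ≤ X ^ θ * (1 + u) := by
      have hexp : a * (X ^ θ * (1 + u)) = a * X ^ θ + 2 * B * X ^ θ' := by
        linear_combination hid
      have h11 : a * ((n : ℝ) ^ θ) ≤ a * (X ^ θ * (1 + u)) := by linarith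
      exact le_of_mul_le_mul_left h11 ha
    have h11 : (n : ℝ) ≤ X * (1 + u) := by
      have h12 := Real.rpow_le_rpow (Real.rpow_nonneg hn0.le _) h10
        (div_nonneg zero_le_one hθ0.le)
      rw [← Real.rpow_mul hn0.le, mul_one_div, div_self (ne_of_gt hθ0), Real.rpow_one,
        Real.mul_rpow (Real.rpow_nonneg hX0.le _) (by linarith), ← Real.rpow_mul hX0.le,
        mul_one_div, div_self (ne_of_gt hθ0), Real.rpow_one] at h12
      have h13 : (1 + u) ^ (1 / θ) ≤ 1 + u := by
        nth_rewrite 2 [← Real.rpow_one (1 + u)]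
        refine Real.rpow_le_rpow_of_exponent_le (by linarith) ?_
        rw [div_le_one hθ0]; linarith
      have h14 := mul_le_mul_of_nonneg_left h13 hX0.le
      linarith
    have hfin : X * (1 + u) = X + 2 * r * X ^ e := by
      rw [hu_def]
      linear_combination (2 * r) * hXe1
    linarith
  -- Lower bound step
  have hL : ∀ n : ℕ, 1 ≤ n → (n : ℝ) ≤ X - r * X ^ e → f.eval n ≤ t := by
    intro n hn hnle
    have hn1 : (1 : ℝ) ≤ (n : ℝ) := by exact_mod_cast hn
    have hn0 : (0 : ℝ) < (n : ℝ) := by linarith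
    set v := r * X ^ (θ' - θ) with hv_def
    have hv0 : 0 ≤ v := mul_nonneg hBa (Real.rpow_nonneg hX0.le _)
    clear_value v
    have hXv : X - r * X ^ e = X * (1 - v) := by
      rw [hv_def]; linear_combination (r) * hXe1
    rw [hXv] at hnle
    have h1v : 0 < 1 - v := by
      rcases le_or_gt (1 - v) 0 with h | h
      · linarith [mul_nonpos_of_nonneg_of_nonpos hX0.le h]
      · exact h
    have hnX : (n : ℝ) ≤ X := by nlinarith [mul_nonneg hX0.le hv0]
    have hcmp := hcomp n hn
    have hup : f.eval n ≤ a * (n : ℝ) ^ θ + B * (n : ℝ) ^ θ' := by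
      have h2 := (abs_le.mp hcmp).2
      linarith
    have hnθ' : (n : ℝ) ^ θ' ≤ X ^ θ' := Real.rpow_le_rpow hn0.le hnX (by linarith)
    have hnθ : (n : ℝ) ^ θ ≤ X ^ θ * (1 - v) := by
      have h2 := Real.rpow_le_rpow hn0.le hnle hθ0.le
      have h3 : (X * (1 - v)) ^ θ = X ^ θ * (1 - v) ^ θ := Real.mul_rpow hX0.le (by linarith)
      have h4 : (1 - v) ^ θ ≤ 1 - v := by
        nth_rewrite 2 [← Real.rpow_one (1 - v)]
        exact Real.rpow_le_rpow_of_exponent_ge h1v (by linarith) (by linarith)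
      have h5 := mul_le_mul_of_nonneg_left h4 (Real.rpow_nonneg hX0.le θ)
      rw [h3] at h2
      linarith
    have hkey : a * (X ^ θ * v) = B * X ^ θ' := by
      have hXX : X ^ (θ' - θ) * X ^ θ = X ^ θ' := by
        rw [← Real.rpow_add hX0]; congr 1; ring
      rw [hv_def, hr_def, ← hXX]
      field_simp
    have e1 : a * (n : ℝ) ^ θ ≤ a * (X ^ θ * (1 - v)) := mul_le_mul_of_nonneg_left hnθ ha.le
    have e2 : B * (n : ℝ) ^ θ' ≤ B * X ^ θ' := mul_le_mul_of_nonneg_left hnθ' hB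
    have e3 : a * (X ^ θ * (1 - v)) = a * X ^ θ - a * (X ^ θ * v) := by ring
    linarith
  -- Counting
  have hcardeq : (Nat.card {n : ℕ // 1 ≤ n ∧ f.eval n ≤ t} : ℕ) =
      ({n : ℕ | 1 ≤ n ∧ f.eval n ≤ t}).ncard := Nat.card_coe_set_eq _
  set M : ℕ := max N1 ⌊X + 2 * r * X ^ e⌋₊ with hM_def
  have hsubU : {n : ℕ | 1 ≤ n ∧ f.eval n ≤ t} ⊆ Set.Icc 1 M := by
    intro n hn
    obtain ⟨hn1, hnf⟩ := hn
    refine ⟨hn1, ?_⟩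
    rcases le_max_iff.mp (hU n hn1 hnf) with h | h
    · exact le_trans (by exact_mod_cast h) (le_max_left _ _)
    · exact le_trans (Nat.le_floor h) (le_max_right _ _)
  have hfin : ({n : ℕ | 1 ≤ n ∧ f.eval n ≤ t}).Finite := (Set.finite_Icc 1 M).subset hsubU
  have hIccM : (Set.Icc 1 M).ncard = M := by
    rw [← Finset.coe_Icc, Set.ncard_coe_finset, Nat.card_Icc]; omega
  have hcard_le : ({n : ℕ | 1 ≤ n ∧ f.eval n ≤ t}).ncard ≤ M := by
    have := Set.ncard_le_ncard hsubU (Set.finite_Icc 1 M)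
    rwa [hIccM] at this
  have hcard_le' : (({n : ℕ | 1 ≤ n ∧ f.eval n ≤ t}).ncard : ℝ) ≤
      (N1 : ℝ) + (X + 2 * r * X ^ e) := by
    have hMR : (M : ℝ) ≤ (N1 : ℝ) + (X + 2 * r * X ^ e) := by
      have hfl : ((⌊X + 2 * r * X ^ e⌋₊ : ℕ) : ℝ) ≤ X + 2 * r * X ^ e :=
        Nat.floor_le (add_nonneg hX0.le (mul_nonneg h2Ba hXe.le))
      rw [hM_def]
      push_cast [Nat.cast_max]
      refine max_le (by linarith [hXe.le, hX0.le]) (by linarith [hN1pos])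
    exact le_trans (by exact_mod_cast hcard_le) hMR
  have hcard_ge : X - r * X ^ e - 1 ≤ (({n : ℕ | 1 ≤ n ∧ f.eval n ≤ t}).ncard : ℝ) := by
    rcases le_or_gt (X - r * X ^ e) 1 with hZ | hZ
    · have : (0 : ℝ) ≤ (({n : ℕ | 1 ≤ n ∧ f.eval n ≤ t}).ncard : ℝ) := Nat.cast_nonneg _
      linarith
    · set K : ℕ := ⌊X - r * X ^ e⌋₊ with hK_def
      have hZ0 : (0 : ℝ) ≤ X - r * X ^ e := by linarith
      have hK1 : 1 ≤ K := by
        rw [hK_def]; exact Nat.le_floor (by exact_mod_cast hZ.le)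
      have hsubL : Set.Icc 1 K ⊆ {n : ℕ | 1 ≤ n ∧ f.eval n ≤ t} := by
        intro n hn
        refine ⟨hn.1, hL n hn.1 ?_⟩
        calc (n : ℝ) ≤ (K : ℝ) := by exact_mod_cast hn.2
          _ ≤ X - r * X ^ e := Nat.floor_le hZ0
      have hKle : K ≤ ({n : ℕ | 1 ≤ n ∧ f.eval n ≤ t}).ncard := by
        have h2 := Set.ncard_le_ncard hsubL hfin
        have hIccK : (Set.Icc 1 K).ncard = K := by
          rw [← Finset.coe_Icc, Set.ncard_coe_finset, Nat.card_Icc]; omega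
        rwa [hIccK] at h2
      have hfl := Nat.lt_floor_add_one (X - r * X ^ e)
      have hKR : (K : ℝ) ≤ (({n : ℕ | 1 ≤ n ∧ f.eval n ≤ t}).ncard : ℝ) := by
        exact_mod_cast hKle
      rw [← hK_def] at hfl
      linarith
  -- translate X^e to t^β
  have hXeβ : X ^ e = t ^ β * a ^ (-β) := by
    rw [hX_def, ← Real.rpow_mul hta.le,
      (show 1 / θ * e = β by rw [hβ_def]; ring),
      Real.div_rpow ht0.le ha.le, Real.rpow_neg ha.le, div_eq_mul_inv]
  have htβ : (0 : ℝ) ≤ t ^ β := Real.rpow_nonneg ht0.le _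
  have haβ : (0 : ℝ) ≤ a ^ (-β) := Real.rpow_nonneg ha.le _
  rw [hcardeq, abs_sub_le_iff]
  constructor
  · have := hcard_le'
    rw [hXeβ] at this
    nlinarith [mul_nonneg (mul_nonneg (by positivity : (0:ℝ) ≤ 2 * r) haβ) htβ,
      mul_nonneg (by linarith : (0:ℝ) ≤ (N1:ℝ)) htβ, mul_nonneg (le_of_lt one_pos) htβ, htβ, hN1pos]
  · have := hcard_ge
    rw [hXeβ] at this
    nlinarith [mul_nonneg (mul_nonneg hBa haβ) htβ,
      mul_nonneg (by linarith : (0:ℝ) ≤ (N1:ℝ)) htβ, htβ, hN1pos,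
      mul_nonneg hBa haβ, mul_nonneg h2Ba haβ,
      mul_nonneg (mul_nonneg h2Ba haβ) htβ]
end
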